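/- arXiv:1905.05152 — 3 statements merged into one kernel-verified Lean document; each statement's English description precedes it below -/
import Mathlib

section
/- (Plancherel theorem for the Laplace transform) If f is a Laplace-Pego function of order x ≥ 0, then (1/(2π)) · ∫_{-∞}^{∞} |𝓛{f}(x + i·y)|² dy = ∫₀^∞ e^{-2·x·t} · |f(t)|² dt. -/
open MeasureTheory Complex Filter Set

/-- The Laplace transform of `f : ℝ → ℂ` (thought of as a function on `(0,∞)`)
at the complex point `z`. -/
noncomputable def LaplaceTransform (f : ℝ → ℂ) (z : ℂ) : ℂ :=
  ∫ t in Set.Ioi (0 : ℝ), f t * Complex.exp (-z * t)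

/-- `f` is a Laplace-Pego function of order `x`: it is measurable and
`f_x : t ↦ f t * e^{-x t}` belongs to `L¹((0,∞)) ∩ L²((0,∞))`. -/
def IsLaplacePego (f : ℝ → ℂ) (x : ℝ) : Prop :=
  Measurable f ∧
  MeasureTheory.IntegrableOn (fun t : ℝ => f t * Real.exp (-x * t)) (Set.Ioi 0) ∧
  MeasureTheory.MemLp (fun t : ℝ => f t * Real.exp (-x * t)) 2
    (MeasureTheory.volume.restrict (Set.Ioi 0))

/-!
On the line `Re z = x`, the Laplace transform of `f` is the Fourier transform of `f_x`
(extended by zero to `ℝ`) at `y / (2π)`. Since `f_x ∈ L¹ ∩ L²`, this Fourier integral agrees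
almost everywhere with the unitary Fourier transform on `L²`: both pair in the same way with
every Schwartz function, by Fubini. Plancherel on `L²` then gives the identity, the factor
`1 / (2π)` being the Jacobian of `y ↦ y / (2π)`.
-/

open scoped FourierTransform

theorem MeasureTheory.L2.norm_sq_eq_integral_norm_sq {α F : Type*} [MeasurableSpace α]
    {μ : Measure α} [NormedAddCommGroup F] [InnerProductSpace ℂ F] (f : Lp F 2 μ) :
    ‖f‖ ^ 2 = ∫ x, ‖f x‖ ^ 2 ∂μ := by
  rw [@norm_sq_eq_re_inner ℂ, L2.inner_def, ← integral_re (L2.integrable_inner f f)]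
  simp_rw [inner_self_eq_norm_sq_to_K]
  norm_cast

section Fourier

variable {V F : Type*} [NormedAddCommGroup V] [InnerProductSpace ℝ V] [FiniteDimensional ℝ V]
  [MeasurableSpace V] [BorelSpace V]
  [NormedAddCommGroup F] [InnerProductSpace ℂ F] [CompleteSpace F]

theorem MeasureTheory.MemLp.fourier_toLp_ae_eq {g : V → F} (hg2 : MemLp g 2)
    (hg1 : Integrable g) :
    (𝓕 (hg2.toLp g) : Lp F 2 (volume : Measure V)) =ᵐ[volume] 𝓕 g := by
  have hcont : Continuous (𝓕 g) :=
    VectorFourier.fourierIntegral_continuous Real.continuous_fourierChar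
      (innerSL ℝ).continuous₂ hg1
  refine ae_eq_of_integral_contDiff_smul_eq ((Lp.memLp _).locallyIntegrable one_le_two)
    hcont.locallyIntegrable fun φ hφ hφc => ?_
  set ψ : SchwartzMap V ℂ := (hφc.comp_left Complex.ofReal_zero).toSchwartzMap
    (Complex.ofRealCLM.contDiff.comp hφ)
  have hψ : ∀ ξ, ψ ξ = φ ξ := fun _ => rfl
  calc ∫ ξ, φ ξ • (𝓕 (hg2.toLp g) : Lp F 2 (volume : Measure V)) ξ
      = Lp.toTemperedDistribution (𝓕 (hg2.toLp g) : Lp F 2 (volume : Measure V)) ψ := by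
        simp [hψ, Complex.coe_smul]
    _ = ∫ x, 𝓕 ψ x • g x := by
        rw [← Lp.fourier_toTemperedDistribution_eq, TemperedDistribution.fourier_apply,
          Lp.toTemperedDistribution_apply]
        exact integral_congr_ae (hg2.coeFn_toLp.mono fun x hx => by simp only [hx])
    _ = ∫ ξ, ψ ξ • 𝓕 g ξ := by
        have h := VectorFourier.integral_fourierIntegral_smul_eq_flip (L := innerₗ V)
          Real.continuous_fourierChar continuous_inner (ψ.integrable (μ := volume)) hg1
        rwa [flip_innerₗ] at h
    _ = ∫ ξ, φ ξ • 𝓕 g ξ := by simp [hψ, Complex.coe_smul]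

theorem MeasureTheory.Integrable.integral_norm_sq_fourier {g : V → F} (hg1 : Integrable g)
    (hg2 : MemLp g 2) : ∫ ξ, ‖𝓕 g ξ‖ ^ 2 = ∫ x, ‖g x‖ ^ 2 := calc
  ∫ ξ, ‖𝓕 g ξ‖ ^ 2 = ∫ ξ, ‖(𝓕 (hg2.toLp g) : Lp F 2 (volume : Measure V)) ξ‖ ^ 2 :=
    integral_congr_ae <| (hg2.fourier_toLp_ae_eq hg1).mono fun ξ hξ => by simp only [hξ]
  _ = ‖hg2.toLp g‖ ^ 2 := by rw [← L2.norm_sq_eq_integral_norm_sq, Lp.norm_fourier_eq]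
  _ = ∫ x, ‖g x‖ ^ 2 := by
    rw [L2.norm_sq_eq_integral_norm_sq]
    exact integral_congr_ae <| hg2.coeFn_toLp.mono fun x hx => by simp only [hx]

end Fourier

noncomputable def laplaceDamped (f : ℝ → ℂ) (x : ℝ) : ℝ → ℂ :=
  (Ioi 0).indicator fun t => f t * Real.exp (-x * t)

theorem laplaceTransform_eq_fourier_laplaceDamped (f : ℝ → ℂ) (x y : ℝ) :
    LaplaceTransform f (x + I * y) = 𝓕 (laplaceDamped f x) (y / (2 * Real.pi)) := by
  rw [Real.fourier_real_eq_integral_exp_smul, laplaceDamped, LaplaceTransform,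
    ← integral_indicator measurableSet_Ioi]
  congr 1 with t
  by_cases ht : t ∈ Ioi 0
  · simp only [indicator_of_mem ht, smul_eq_mul]
    rw [ofReal_exp, mul_assoc, mul_left_comm, ← Complex.exp_add]
    congr 2
    field_simp
    push_cast
    ring
  · simp [indicator_of_notMem ht]

theorem IsLaplacePego.integrable_laplaceDamped {f : ℝ → ℂ} {x : ℝ} (hf : IsLaplacePego f x) :
    Integrable (laplaceDamped f x) :=
  (integrable_indicator_iff measurableSet_Ioi).2 hf.2.1

theorem IsLaplacePego.memLp_laplaceDamped {f : ℝ → ℂ} {x : ℝ} (hf : IsLaplacePego f x) :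
    MemLp (laplaceDamped f x) 2 :=
  (memLp_indicator_iff_restrict measurableSet_Ioi).2 hf.2.2

theorem integral_norm_sq_laplaceDamped (f : ℝ → ℂ) (x : ℝ) :
    ∫ t, ‖laplaceDamped f x t‖ ^ 2 = ∫ t in Ioi 0, Real.exp (-(2 * x * t)) * ‖f t‖ ^ 2 := by
  rw [← integral_indicator measurableSet_Ioi]
  congr 1 with t
  by_cases ht : t ∈ Ioi 0
  · simp only [laplaceDamped, indicator_of_mem ht, norm_mul, norm_real, Real.norm_eq_abs,
      abs_of_pos (Real.exp_pos _), mul_pow, ← Real.exp_nat_mul]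
    ring_nf
  · simp [laplaceDamped, indicator_of_notMem ht]

theorem laplace_plancherel_general (f : ℝ → ℂ) (x : ℝ) (hf : IsLaplacePego f x) :
    (1 / (2 * Real.pi)) *
        ∫ y : ℝ, ‖LaplaceTransform f ((x : ℂ) + Complex.I * y)‖ ^ 2 =
      ∫ t in Set.Ioi (0 : ℝ), Real.exp (-(2 * x * t)) * ‖f t‖ ^ 2 := by
  simp_rw [laplaceTransform_eq_fourier_laplaceDamped]
  rw [Measure.integral_comp_div (fun ξ => ‖𝓕 (laplaceDamped f x) ξ‖ ^ 2),
    hf.integrable_laplaceDamped.integral_norm_sq_fourier hf.memLp_laplaceDamped,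
    integral_norm_sq_laplaceDamped, abs_of_pos Real.two_pi_pos, smul_eq_mul, ← mul_assoc,
    one_div_mul_cancel Real.two_pi_pos.ne', one_mul]

/-- Plancherel theorem for the Laplace transform:
`(1/(2π)) ∫_{-∞}^∞ |𝓛{f}(x+iy)|² dy = ∫₀^∞ e^{-2xt} |f(t)|² dt`. -/
theorem laplace_plancherel (f : ℝ → ℂ) (x : ℝ) (hx : 0 ≤ x) (hf : IsLaplacePego f x) :
    (1 / (2 * Real.pi)) *
        ∫ y : ℝ, ‖LaplaceTransform f ((x : ℂ) + Complex.I * y)‖ ^ 2 =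
      ∫ t in Set.Ioi (0 : ℝ), Real.exp (-(2 * x * t)) * ‖f t‖ ^ 2 :=
  laplace_plancherel_general f x hf
end

section
/- (Convolution theorem for the Laplace transform) If f and g are Laplace-Pego functions with a common order x ≥ 0, then for every complex number z with Re(z) ≥ x one has 𝓛{f ⋆ g}(z) = 𝓛{f}(z) · 𝓛{g}(z). -/
/-!
Extend `t ↦ f t * e^{-zt}` by zero to all of `ℝ`. For `Re z ≥ x` this is integrable, since
`|e^{-zt}| ≤ e^{-xt}` on `(0,∞)`. Because `e^{-zs} e^{-z(t-s)} = e^{-zt}`, the convolution on `ℝ`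
of the extended integrands of `f` and `g` is the extended integrand of `f ⋆ g`, and the
integral of a convolution of integrable functions is the product of their integrals.
-/

open MeasureTheory Complex Filter Set
open scoped Convolution

/-- The convolution `(f ⋆ g)(t) = ∫₀^t f(s) g(t-s) ds` of functions on `(0,∞)`. -/
noncomputable def LaplaceConv (f g : ℝ → ℂ) (t : ℝ) : ℂ :=
  ∫ s in Set.Ioo (0 : ℝ) t, f s * g (t - s)

/-- Extended by zero to all of `ℝ`, so that the convolution and Fubini theory on `ℝ` apply. -/
noncomputable def laplaceIntegrand (f : ℝ → ℂ) (z : ℂ) : ℝ → ℂ :=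
  (Ioi 0).indicator fun t => f t * exp (-z * t)

theorem integral_laplaceIntegrand (f : ℝ → ℂ) (z : ℂ) :
    ∫ t, laplaceIntegrand f z t = LaplaceTransform f z :=
  integral_indicator measurableSet_Ioi

theorem norm_exp_neg_mul_le {x t : ℝ} {z : ℂ} (hz : x ≤ z.re) (ht : 0 ≤ t) :
    ‖exp (-z * t)‖ ≤ Real.exp (-x * t) := by
  rw [norm_exp, Real.exp_le_exp]
  simpa [mul_re] using mul_le_mul_of_nonneg_right hz ht

theorem integrable_laplaceIntegrand {f : ℝ → ℂ} {x : ℝ} {z : ℂ} (hz : x ≤ z.re)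
    (hm : AEStronglyMeasurable f) (hi : IntegrableOn (fun t => f t * Real.exp (-x * t)) (Ioi 0)) :
    Integrable (laplaceIntegrand f z) := by
  refine (integrable_indicator_iff measurableSet_Ioi).2 <| Integrable.mono hi
    (hm.restrict.mul (by fun_prop)) ?_
  filter_upwards [ae_restrict_mem measurableSet_Ioi] with t ht
  rw [norm_mul, norm_mul, norm_real, Real.norm_of_nonneg (Real.exp_pos _).le]
  exact mul_le_mul_of_nonneg_left (norm_exp_neg_mul_le hz (le_of_lt ht)) (norm_nonneg _)

theorem laplaceIntegrand_mul_laplaceIntegrand_sub (f g : ℝ → ℂ) (z : ℂ) (t s : ℝ) :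
    laplaceIntegrand f z s * laplaceIntegrand g z (t - s) =
      (Ioo 0 t).indicator (fun s => f s * g (t - s)) s * exp (-z * t) := by
  by_cases hs : s ∈ Ioo 0 t
  · have hts : 0 < t - s := sub_pos.2 hs.2
    rw [laplaceIntegrand, laplaceIntegrand, indicator_of_mem hs, indicator_of_mem (mem_Ioi.2 hs.1),
      indicator_of_mem (mem_Ioi.2 hts),
      show -z * (t : ℂ) = -z * s + -z * ((t - s : ℝ) : ℂ) by push_cast; ring, exp_add]
    ring
  · rw [indicator_of_notMem hs, zero_mul]
    rcases not_and_or.1 (mem_Ioo.not.1 hs) with h | h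
    · rw [laplaceIntegrand, indicator_of_notMem (show s ∉ Ioi 0 from h), zero_mul]
    · have hts : t - s ∉ Ioi 0 := by simpa using h
      rw [laplaceIntegrand, laplaceIntegrand, indicator_of_notMem hts, mul_zero]

theorem convolution_laplaceIntegrand (f g : ℝ → ℂ) (z : ℂ) :
    laplaceIntegrand f z ⋆[ContinuousLinearMap.mul ℝ ℂ] laplaceIntegrand g z =
      laplaceIntegrand (LaplaceConv f g) z := by
  ext t
  simp only [convolution_def, ContinuousLinearMap.mul_apply',
    laplaceIntegrand_mul_laplaceIntegrand_sub, integral_mul_const,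
    integral_indicator measurableSet_Ioo]
  by_cases ht : 0 < t
  · rw [laplaceIntegrand, indicator_of_mem (mem_Ioi.2 ht), LaplaceConv]
  · rw [laplaceIntegrand, indicator_of_notMem (by simpa using ht), Ioo_eq_empty (by simpa using ht),
      Measure.restrict_empty, integral_zero_measure, zero_mul]

theorem laplace_conv_general (f g : ℝ → ℂ) (x : ℝ)
    (hf : IsLaplacePego f x) (hg : IsLaplacePego g x) :
    ∀ z : ℂ, x ≤ z.re →
      LaplaceTransform (LaplaceConv f g) z = LaplaceTransform f z * LaplaceTransform g z := by
  intro z hz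
  have hF := integrable_laplaceIntegrand hz hf.1.aestronglyMeasurable hf.2.1
  have hG := integrable_laplaceIntegrand hz hg.1.aestronglyMeasurable hg.2.1
  have hFubini := integral_convolution (ContinuousLinearMap.mul ℝ ℂ) hF hG
  rwa [convolution_laplaceIntegrand, integral_laplaceIntegrand, integral_laplaceIntegrand,
    integral_laplaceIntegrand] at hFubini

/-- convolution theorem for the Laplace transform: for Laplace-Pego
functions `f, g` of common order `x` and any `z` with `Re z ≥ x`,
`𝓛{f ⋆ g}(z) = 𝓛{f}(z) ⬝ 𝓛{g}(z)`. -/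
theorem laplace_conv (f g : ℝ → ℂ) (x : ℝ) (hx : 0 ≤ x)
    (hf : IsLaplacePego f x) (hg : IsLaplacePego g x) :
    ∀ z : ℂ, x ≤ z.re →
      LaplaceTransform (LaplaceConv f g) z = LaplaceTransform f z * LaplaceTransform g z :=
  laplace_conv_general f g x hf hg
end

section
/- Let 𝓕 be a family of Laplace-Pego functions with a common order x ≥ 0 such that the family 𝓕_x = {f_x : f ∈ 𝓕} is bounded in L²((0,∞)). If 𝓕 is exponentially L²-equicontinuous at x, then the family 𝓕_x is L²-equicontinuous, i.e. for every ε > 0 there exists δ > 0 such that for all s ∈ (0,δ) and all f ∈ 𝓕, ∫₀^∞ |e^{-x·(t+s)}·f(t+s) - e^{-x·t}·f(t)|² dt < ε. -/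
open MeasureTheory Complex Filter Set

/-- The family `𝓕_x = {f_x : f ∈ 𝓕}` is bounded in `L²((0,∞))`:
there is `M > 0` with `∫₀^∞ e^{-2xt} |f(t)|² dt < M` for all `f ∈ 𝓕`. -/
def L2BoundedFamily (𝓕 : Set (ℝ → ℂ)) (x : ℝ) : Prop :=
  ∃ M : ℝ, 0 < M ∧ ∀ f ∈ 𝓕,
    ∫ t in Set.Ioi (0 : ℝ), Real.exp (-(2 * x * t)) * ‖f t‖ ^ 2 < M

/-- `𝓕` is Laplace equicontinuous at `x`: for every `ε > 0` there is `δ > 0` with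
`(1/(2π)) ∫_ℝ |𝓛{f}(x+iy+δ) - 𝓛{f}(x+iy)|² dy < ε` for all `f ∈ 𝓕`. -/
def LaplaceEquicontinuous (𝓕 : Set (ℝ → ℂ)) (x : ℝ) : Prop :=
  ∀ ε : ℝ, 0 < ε → ∃ δ : ℝ, 0 < δ ∧ ∀ f ∈ 𝓕,
    (1 / (2 * Real.pi)) *
        ∫ y : ℝ,
          ‖LaplaceTransform f ((x : ℂ) + Complex.I * y + (δ : ℂ)) -
              LaplaceTransform f ((x : ℂ) + Complex.I * y)‖ ^ 2 < ε

/-- `𝓕` is exponentially `L²`-equivanishing at `x`: for every `ε > 0` there is `T > 0`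
with `∫_T^∞ e^{-2xt} |f(t)|² dt < ε` for all `f ∈ 𝓕`. -/
def ExpL2Equivanishing (𝓕 : Set (ℝ → ℂ)) (x : ℝ) : Prop :=
  ∀ ε : ℝ, 0 < ε → ∃ T : ℝ, 0 < T ∧ ∀ f ∈ 𝓕,
    ∫ t in Set.Ioi T, Real.exp (-(2 * x * t)) * ‖f t‖ ^ 2 < ε

/-- `𝓕` is exponentially `L²`-equicontinuous at `x`: for every `ε > 0` there is `δ > 0`
with `(∫₀^∞ e^{-2xt} |f(t) - f(t-s)|² dt)^{1/2} < ε` for all `s ∈ (0,δ)`, `f ∈ 𝓕`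
(functions are extended by `0` for nonpositive arguments, so `f (t - s) = 0` when `t ≤ s`). -/
def ExpL2Equicontinuous (𝓕 : Set (ℝ → ℂ)) (x : ℝ) : Prop :=
  ∀ ε : ℝ, 0 < ε → ∃ δ : ℝ, 0 < δ ∧ ∀ s ∈ Set.Ioo (0 : ℝ) δ, ∀ f ∈ 𝓕,
    Real.sqrt
        (∫ t in Set.Ioi (0 : ℝ),
          Real.exp (-(2 * x * t)) * ‖f t - f (t - s)‖ ^ 2) < ε

/-- `𝓕` is Laplace equivanishing at `x`: for every `ε > 0` there is `T > 0` with
`∫_{ℝ∖[-T,T]} |𝓛{f}(x+iy)|² dy < ε` for all `f ∈ 𝓕`. -/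
def LaplaceEquivanishing (𝓕 : Set (ℝ → ℂ)) (x : ℝ) : Prop :=
  ∀ ε : ℝ, 0 < ε → ∃ T : ℝ, 0 < T ∧ ∀ f ∈ 𝓕,
    ∫ y in (Set.Icc (-T) T)ᶜ,
      ‖LaplaceTransform f ((x : ℂ) + Complex.I * y)‖ ^ 2 < ε

/-!
Writing `f_x(t + s) - f_x(t) = e^{-x(t+s)} (f(t + s) - f(t)) + (e^{-xs} - 1) f_x(t)`, the square
integral of the first term is, after the translation `t ↦ t - s`, at most the exponential
`L²`-modulus of continuity of `f` at `s` (this uses that `f` vanishes on `(-∞, 0]`, so that `f_x`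
is square integrable on all of `ℝ`), and that of the second term is `(e^{-xs} - 1)²` times the
`L²`-bound of `𝓕_x`, which tends to `0` with `s`.
-/

open Topology

theorem norm_add_sq_le_two_mul {E : Type*} [SeminormedAddGroup E] (a b : E) :
    ‖a + b‖ ^ 2 ≤ 2 * ‖a‖ ^ 2 + 2 * ‖b‖ ^ 2 := by
  nlinarith [add_sq_le (a := ‖a‖) (b := ‖b‖), norm_add_le a b, norm_nonneg (a + b)]

theorem MemLp.of_restrict_of_eqOn_compl {α E : Type*} [MeasurableSpace α] [NormedAddCommGroup E]
    {μ : Measure α} {p : ENNReal} {S : Set α} {f : α → E} (hS : MeasurableSet S)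
    (hf : MemLp f p (μ.restrict S)) (h0 : EqOn f 0 Sᶜ) : MemLp f p μ := by
  have hf_ind : S.indicator f = f :=
    indicator_eq_self.2 fun a ha => by_contra fun haS => ha (h0 haS)
  rw [← hf_ind]
  exact (memLp_indicator_iff_restrict hS).2 hf

theorem setIntegral_Ioi_comp_add_right_le {g : ℝ → ℝ} {a s : ℝ} (hs : 0 ≤ s) (hg : 0 ≤ g)
    (hint : IntegrableOn g (Ioi a)) : ∫ t in Ioi a, g (t + s) ≤ ∫ t in Ioi a, g t :=
  calc ∫ t in Ioi a, g (t + s) = ∫ t in Ioi (a + s), g t := by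
        rw [← image_add_const_Ioi]
        exact ((measurePreserving_add_right volume s).setIntegral_image_emb
          (measurableEmbedding_addRight s) g _).symm
    _ ≤ ∫ t in Ioi a, g t :=
        setIntegral_mono_set hint (.of_forall hg) (Ioi_subset_Ioi (by linarith)).eventuallyLE

/-- `f_x` in the paper's notation. -/
noncomputable def expWeight (x : ℝ) (f : ℝ → ℂ) (t : ℝ) : ℂ :=
  Real.exp (-(x * t)) * f t

theorem norm_expWeight_sq (x : ℝ) (f : ℝ → ℂ) (t : ℝ) :
    ‖expWeight x f t‖ ^ 2 = Real.exp (-(2 * x * t)) * ‖f t‖ ^ 2 := by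
  rw [expWeight, norm_mul, mul_pow, Complex.norm_real, Real.norm_of_nonneg (Real.exp_pos _).le,
    ← Real.exp_nat_mul]
  ring_nf

theorem expWeight_sub_comp_sub (x s : ℝ) (f : ℝ → ℂ) (t : ℝ) :
    expWeight x (fun u => f u - f (u - s)) t =
      expWeight x f t - Real.exp (-(x * s)) * expWeight x f (t - s) := by
  simp only [expWeight]
  rw [mul_sub, ← mul_assoc, ← Complex.ofReal_mul, ← Real.exp_add]
  ring_nf

theorem IsLaplacePego.memLp_expWeight {f : ℝ → ℂ} {x : ℝ} (hf : IsLaplacePego f x)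
    (hzero : ∀ t ≤ 0, f t = 0) : MemLp (expWeight x f) 2 volume := by
  refine MemLp.of_restrict_of_eqOn_compl (measurableSet_Ioi (a := 0)) ?_ fun t ht => ?_
  · convert hf.2.2 using 2 with t
    rw [expWeight, mul_comm, neg_mul]
  · simp [expWeight, hzero t (not_lt.1 ht)]

theorem integral_norm_sq_expWeight_shift_sub_le {f : ℝ → ℂ} {x s : ℝ} (hf : IsLaplacePego f x)
    (hzero : ∀ t ≤ 0, f t = 0) (hs : 0 ≤ s) :
    ∫ t in Ioi 0, ‖expWeight x f (t + s) - expWeight x f t‖ ^ 2 ≤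
      2 * (∫ t in Ioi 0, Real.exp (-(2 * x * t)) * ‖f t - f (t - s)‖ ^ 2) +
        2 * ((Real.exp (-(x * s)) - 1) ^ 2 *
          ∫ t in Ioi 0, Real.exp (-(2 * x * t)) * ‖f t‖ ^ 2) := by
  set c : ℝ := Real.exp (-(x * s))
  set g : ℝ → ℝ := fun t => Real.exp (-(2 * x * t)) * ‖f t - f (t - s)‖ ^ 2
  set h : ℝ → ℝ := fun t => Real.exp (-(2 * x * t)) * ‖f t‖ ^ 2
  have hW := hf.memLp_expWeight hzero
  have hD : MemLp (expWeight x fun u => f u - f (u - s)) 2 volume := by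
    convert hW.sub ((hW.comp_measurePreserving (measurePreserving_sub_right volume s)).const_mul
      (c : ℂ)) using 1
    exact funext (expWeight_sub_comp_sub x s f)
  have hg : Integrable g := by
    simpa only [norm_expWeight_sq] using hD.integrable_norm_pow two_ne_zero
  have hh : Integrable h := by
    simpa only [norm_expWeight_sq] using hW.integrable_norm_pow two_ne_zero
  have hpt (t : ℝ) : ‖expWeight x f (t + s) - expWeight x f t‖ ^ 2 ≤
      2 * g (t + s) + 2 * ((c - 1) ^ 2 * h t) := by
    have hsplit : expWeight x f (t + s) - expWeight x f t =
        expWeight x (fun u => f u - f (u - s)) (t + s) + ((c - 1 : ℝ) : ℂ) * expWeight x f t := by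
      rw [expWeight_sub_comp_sub, add_sub_cancel_right, Complex.ofReal_sub, Complex.ofReal_one]
      ring
    refine hsplit ▸ (norm_add_sq_le_two_mul _ _).trans_eq ?_
    rw [norm_mul, mul_pow, norm_expWeight_sq, norm_expWeight_sq, Complex.norm_real,
      Real.norm_eq_abs, sq_abs]
  calc ∫ t in Ioi 0, ‖expWeight x f (t + s) - expWeight x f t‖ ^ 2
      ≤ ∫ t in Ioi 0, (2 * g (t + s) + 2 * ((c - 1) ^ 2 * h t)) :=
        integral_mono_of_nonneg (.of_forall fun _ => by positivity)
          (((hg.comp_add_right s).const_mul 2).add ((hh.const_mul _).const_mul 2)).restrict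
          (.of_forall hpt)
    _ = 2 * (∫ t in Ioi 0, g (t + s)) + 2 * ((c - 1) ^ 2 * ∫ t in Ioi 0, h t) := by
        rw [integral_add ((hg.comp_add_right s).const_mul 2).restrict
            ((hh.const_mul _).const_mul 2).restrict,
          integral_const_mul, integral_const_mul, integral_const_mul]
    _ ≤ 2 * (∫ t in Ioi 0, g t) + 2 * ((c - 1) ^ 2 * ∫ t in Ioi 0, h t) := by
        gcongr 2 * ?_ + _
        exact setIntegral_Ioi_comp_add_right_le hs (fun _ => by positivity) hg.integrableOn

theorem l2Equicontinuous_of_expL2Equicontinuous_general (𝓕 : Set (ℝ → ℂ)) (x : ℝ)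
    (h𝓕 : ∀ f ∈ 𝓕, IsLaplacePego f x)
    (hzero : ∀ f ∈ 𝓕, ∀ t : ℝ, t ≤ 0 → f t = 0)
    (hbdd : L2BoundedFamily 𝓕 x) (hequi : ExpL2Equicontinuous 𝓕 x) :
    ∀ ε : ℝ, 0 < ε → ∃ δ : ℝ, 0 < δ ∧ ∀ s ∈ Set.Ioo (0 : ℝ) δ, ∀ f ∈ 𝓕,
      ∫ t in Set.Ioi (0 : ℝ),
        ‖Real.exp (-(x * (t + s))) * f (t + s) -
          Real.exp (-(x * t)) * f t‖ ^ 2 < ε := by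
  obtain ⟨M, -, hM⟩ := hbdd
  intro ε hε
  obtain ⟨δ₁, hδ₁, hequi⟩ := hequi √(ε / 4) (by positivity)
  have hdamping : ∀ᶠ s in 𝓝 0, (Real.exp (-(x * s)) - 1) ^ 2 * M < ε / 4 := by
    have hcont : Continuous fun s => (Real.exp (-(x * s)) - 1) ^ 2 * M := by fun_prop
    have hlim : Tendsto (fun s => (Real.exp (-(x * s)) - 1) ^ 2 * M) (𝓝 0) (𝓝 0) := by
      simpa using hcont.tendsto 0
    exact hlim.eventually_lt_const (by positivity)
  obtain ⟨δ₂, hδ₂, hdamping⟩ := Metric.eventually_nhds_iff.1 hdamping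
  refine ⟨min δ₁ δ₂, lt_min hδ₁ hδ₂, fun s ⟨hs0, hsδ⟩ f hf => ?_⟩
  have hshift :=
    (Real.sqrt_lt' (by positivity)).1 (hequi s ⟨hs0, hsδ.trans_le (min_le_left _ _)⟩ f hf)
  have hweight := hdamping (show dist s 0 < δ₂ by
    rw [Real.dist_0_eq_abs, abs_of_pos hs0]; exact hsδ.trans_le (min_le_right _ _))
  have hbound := mul_le_mul_of_nonneg_left (hM f hf).le (sq_nonneg (Real.exp (-(x * s)) - 1))
  rw [Real.sq_sqrt (by positivity)] at hshift
  exact (integral_norm_sq_expWeight_shift_sub_le (h𝓕 f hf) (hzero f hf) hs0.le).trans_lt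
    (by linarith)

/-- if `𝓕_x` is `L²`-bounded and `𝓕` is exponentially `L²`-equicontinuous
at `x`, then `𝓕_x` is `L²`-equicontinuous. -/
theorem l2Equicontinuous_of_expL2Equicontinuous (𝓕 : Set (ℝ → ℂ)) (x : ℝ)
    (hx : 0 ≤ x) (h𝓕 : ∀ f ∈ 𝓕, IsLaplacePego f x)
    (hzero : ∀ f ∈ 𝓕, ∀ t : ℝ, t ≤ 0 → f t = 0)
    (hbdd : L2BoundedFamily 𝓕 x) (hequi : ExpL2Equicontinuous 𝓕 x) :
    ∀ ε : ℝ, 0 < ε → ∃ δ : ℝ, 0 < δ ∧ ∀ s ∈ Set.Ioo (0 : ℝ) δ, ∀ f ∈ 𝓕,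
      ∫ t in Set.Ioi (0 : ℝ),
        ‖Real.exp (-(x * (t + s))) * f (t + s) -
          Real.exp (-(x * t)) * f t‖ ^ 2 < ε :=
  l2Equicontinuous_of_expL2Equicontinuous_general 𝓕 x h𝓕 hzero hbdd hequi
end
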